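/- Let (k, J', ⟨·,·⟩') be a Kähler flat Lie algebra with fundamental form ω', and D' a skew-symmetric derivation of k commuting with J'. Extend D' to a derivation D of the central extension k_{ω'}(B) by D(B) = 0, form g = ℝA ⋉_D k_{ω'}(B), extend J by JA = B, J|_k = J', and extend the metric so {A, B} is orthonormal and orthogonal to k. Then J is an integrable complex structure on g: N_J(x,y) = 0 for all x, y ∈ g. -/
import Mathlib


/-- The bracket of the double extension `g = ℝA ⋉_D (ℝB ⊕_{ω'} k)`, written on
`ℝ × ℝ × k` (coordinates: `A`-component, `B`-component, `k`-component):
`[(a,b,x),(a',b',y)] = (0, ω'(x,y), a D'y - a' D'x + [x,y]_k)`,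
where `ω'(x,y) = ⟨J'x, y⟩'`. -/
def deBracket {k : Type*} [LieRing k] [LieAlgebra ℝ k]
    (B' : k →ₗ[ℝ] k →ₗ[ℝ] ℝ) (J' D' : k →ₗ[ℝ] k) :
    (ℝ × ℝ × k) → (ℝ × ℝ × k) → (ℝ × ℝ × k) :=
  fun u v =>
    (0, B' (J' u.2.2) v.2.2, u.1 • D' v.2.2 - v.1 • D' u.2.2 + ⁅u.2.2, v.2.2⁆)

/-- The complex structure of the double extension: `JA = B`, `JB = -A`,
`J|_k = J'`. -/
def deJ {k : Type*} [LieRing k] [LieAlgebra ℝ k] (J' : k →ₗ[ℝ] k) : (ℝ × ℝ × k) → (ℝ × ℝ × k) :=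
  fun u => (-u.2.1, u.1, J' u.2.2)

/-- For a Kähler flat Lie algebra `(k, J', ⟨·,·⟩')` and a
skew-symmetric derivation `D'` commuting with `J'`, the extension `J` of `J'`
to the double extension `g = ℝA ⋉_D (ℝB ⊕_{ω'} k)` (with `JA = B`) is an
integrable complex structure: `N_J = 0`. -/
theorem doubleExtension_J_integrable {k : Type*} [LieRing k] [LieAlgebra ℝ k]
    (B' : k →ₗ[ℝ] k →ₗ[ℝ] ℝ)
    (hsymm : ∀ x y : k, B' x y = B' y x)
    (hpos : ∀ x : k, x ≠ 0 → 0 < B' x x)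
    (J' : k →ₗ[ℝ] k)
    (hJ2 : ∀ x : k, J' (J' x) = -x)
    (hcompat : ∀ x y : k, B' (J' x) (J' y) = B' x y)
    (hNJ' : ∀ x y : k, ⁅J' x, J' y⁆ - ⁅x, y⁆ - J' (⁅J' x, y⁆ + ⁅x, J' y⁆) = 0)
    -- dω' = 0 (k is Kähler)
    (hdω' : ∀ x y w : k,
      B' (J' ⁅x, y⁆) w + B' (J' ⁅y, w⁆) x + B' (J' ⁅w, x⁆) y = 0)
    (D' : k →ₗ[ℝ] k)
    (hder : ∀ x y : k, D' ⁅x, y⁆ = ⁅D' x, y⁆ + ⁅x, D' y⁆)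
    (hDskew : ∀ x y : k, B' (D' x) y = - B' x (D' y))
    (hDJ : ∀ x : k, D' (J' x) = J' (D' x)) :
    ∀ u v : ℝ × ℝ × k,
      deBracket B' J' D' (deJ J' u) (deJ J' v) - deBracket B' J' D' u v
        - deJ J' (deBracket B' J' D' (deJ J' u) v
            + deBracket B' J' D' u (deJ J' v)) = 0 := by
  rintro ⟨a, b, x⟩ ⟨a', b', y⟩
  have hxy : B' (J' x) y = - B' x (J' y) := by
    have := hcompat (J' x) y
    rw [hJ2] at this
    simp only [map_neg, LinearMap.neg_apply] at this
    linarith [this]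
  simp only [deBracket, deJ, Prod.ext_iff, Prod.fst_sub, Prod.snd_sub, Prod.fst_add,
    Prod.snd_add, Prod.fst_zero, Prod.snd_zero, hJ2, map_neg, LinearMap.neg_apply]
  refine ⟨?_, ?_, ?_⟩
  · have := hcompat x y
    linarith
  · linarith [hxy]
  · have h1 := hNJ' x y
    have h4 : J' (J' (D' x)) = -D' x := hJ2 _
    have h5 : J' (J' (D' y)) = -D' y := hJ2 _
    simp only [map_add, map_smul, map_sub, map_neg, hDJ, h4, h5, smul_neg]
    simp only [map_add] at h1
    linear_combination (norm := module) h1
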